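/- Assume that the class of τ-torsion left R-modules is closed under submodules (τ is hereditary). Then the following are equivalent: (1) Flat(R) has enough flat objects, i.e. for every flat module F there exist a flat object G of Flat(R) and a morphism G → F that is an epimorphism in Flat(R); (2) the class of τ-torsion modules is closed under arbitrary direct products, and there is a surjective R-linear map G → L_τ(R) with G flat and τ-cotorsion-free, where L_τ(R) is the intersection of all τ-dense left ideals of R; (3) there exists a flat, pseudoprojective, τ-cotorsion-free left R-module G such that a module X is τ-torsion if and only if Hom_R(G, X) = 0. -/

import Mathlib

universe u

/-- A module `T` is `τ`-torsion (for the torsion theory cogenerated by the flat modules) if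
every `R`-linear map from `T` to a flat module is zero. -/
def TauTorsion (R : Type u) [CommRing R] (T : Type u) [AddCommGroup T] [Module R T] : Prop :=
  ∀ (F : Type u) [AddCommGroup F] [Module R F], Module.Flat R F → ∀ f : T →ₗ[R] F, f = 0

variable {R : Type u} [CommRing R]

/-- A module `M` is `τ`-cotorsion-free if its only `τ`-dense submodule is `M` itself. -/
def TauCotorsionFree (R : Type u) [CommRing R] (M : Type u) [AddCommGroup M] [Module R M] :
    Prop :=
  ∀ K : Submodule R M, TauTorsion R (M ⧸ K) → K = ⊤

/-- `f` is an epimorphism in the category `Flat(R)` of flat modules. -/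
def EpiInFlat {F G : Type u} [AddCommGroup F] [Module R F] [AddCommGroup G] [Module R G]
    (f : F →ₗ[R] G) : Prop :=
  ∀ (H : Type u) [AddCommGroup H] [Module R H], Module.Flat R H →
    ∀ g₁ g₂ : G →ₗ[R] H, g₁ ∘ₗ f = g₂ ∘ₗ f → g₁ = g₂

/-- A flat module `G` is a flat object of `Flat(R)` if every epimorphism of `Flat(R)` with
codomain `G` is surjective. -/
def IsFlatObjectOfFlat (R : Type u) [CommRing R] (G : Type u) [AddCommGroup G] [Module R G] :
    Prop :=
  Module.Flat R G ∧
    ∀ (H : Type u) [AddCommGroup H] [Module R H], Module.Flat R H →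
      ∀ h : H →ₗ[R] G, EpiInFlat h → Function.Surjective h

/-- A module `M` is pseudoprojective if for every surjective `p : A → B` and nonzero
`g : M → B` there exist `s : M → M` and `h : M → A` with `p ∘ h = g ∘ s ≠ 0`. -/
def Pseudoprojective (R : Type u) [CommRing R] (M : Type u) [AddCommGroup M] [Module R M] :
    Prop :=
  ∀ (A B : Type u) [AddCommGroup A] [Module R A] [AddCommGroup B] [Module R B]
    (p : A →ₗ[R] B), Function.Surjective p →
    ∀ g : M →ₗ[R] B, g ≠ 0 →
      ∃ (s : M →ₗ[R] M) (h : M →ₗ[R] A), p ∘ₗ h = g ∘ₗ s ∧ g ∘ₗ s ≠ 0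

/-- `L_τ(R)`: the intersection of all `τ`-dense left ideals of `R`. -/
def LTau (R : Type u) [CommRing R] : Submodule R R :=
  sInf {I : Submodule R R | TauTorsion R (R ⧸ I)}

section Helpers

lemma tau_of_surjective {A B : Type u} [AddCommGroup A] [Module R A] [AddCommGroup B]
    [Module R B] (π : A →ₗ[R] B) (hπ : Function.Surjective π) (hA : TauTorsion R A) :
    TauTorsion R B := by
  intro F _ _ hF f
  have h := hA F hF (f ∘ₗ π)
  ext b
  obtain ⟨a, rfl⟩ := hπ b
  simpa using LinearMap.congr_fun h a

lemma tau_of_injective (hher : ∀ (M : Type u) [AddCommGroup M] [Module R M], TauTorsion R M →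
      ∀ K : Submodule R M, TauTorsion R ↥K) {A B : Type u} [AddCommGroup A] [Module R A] [AddCommGroup B]
    [Module R B] (ι : A →ₗ[R] B) (hι : Function.Injective ι) (hB : TauTorsion R B) :
    TauTorsion R A := by
  have hr : TauTorsion R ↥(LinearMap.range ι) := hher B hB _
  exact tau_of_surjective (LinearEquiv.ofInjective ι hι).symm.toLinearMap
    (LinearEquiv.ofInjective ι hι).symm.surjective hr

lemma epiInFlat_iff {A B : Type u} [AddCommGroup A] [Module R A] [AddCommGroup B] [Module R B]
    (f : A →ₗ[R] B) : EpiInFlat f ↔ TauTorsion R (B ⧸ LinearMap.range f) := by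
  constructor
  · intro he F _ _ hF q
    have h : (q ∘ₗ (LinearMap.range f).mkQ) ∘ₗ f = (0 : B →ₗ[R] F) ∘ₗ f := by
      ext a
      have h0 : (LinearMap.range f).mkQ (f a) = 0 :=
        (Submodule.Quotient.mk_eq_zero _).2 ⟨a, rfl⟩
      simp [LinearMap.comp_apply, h0]
    have := he F hF (q ∘ₗ (LinearMap.range f).mkQ) 0 h
    ext x
    simpa using LinearMap.congr_fun this x
  · intro ht H _ _ hH g₁ g₂ hg
    have hle : LinearMap.range f ≤ LinearMap.ker (g₁ - g₂) := by
      rintro _ ⟨a, rfl⟩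
      have := LinearMap.congr_fun hg a
      simp only [LinearMap.comp_apply] at this
      simp [LinearMap.mem_ker, LinearMap.sub_apply, this]
    have hq := ht H hH ((LinearMap.range f).liftQ (g₁ - g₂) hle)
    have : g₁ - g₂ = 0 := by
      ext b
      have := LinearMap.congr_fun hq (Submodule.Quotient.mk b)
      simpa [Submodule.liftQ_apply] using this
    exact sub_eq_zero.mp (by simpa using this)

end Helpers

section Helpers2

variable (hher : ∀ (M : Type u) [AddCommGroup M] [Module R M], TauTorsion R M →
      ∀ K : Submodule R M, TauTorsion R ↥K)

/-- Transfer torsion along an equality of submodules for quotients. -/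
lemma tau_quot_congr {M : Type u} [AddCommGroup M] [Module R M] {K K' : Submodule R M}
    (h : K = K') (ht : TauTorsion R (M ⧸ K)) : TauTorsion R (M ⧸ K') := by subst h; exact ht

lemma flat_finsupp (ι M : Type u) [AddCommGroup M] [Module R M] (hM : Module.Flat R M) :
    Module.Flat R (ι →₀ M) := by
  classical
  haveI := hM
  exact Module.Flat.of_linearEquiv (finsuppLEquivDirectSum R M ι)

omit hher in
lemma flatObject_iff {G : Type u} [AddCommGroup G] [Module R G] :
    IsFlatObjectOfFlat R G ↔ (Module.Flat R G ∧ TauCotorsionFree R G) := by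
  constructor
  · rintro ⟨hflat, hobj⟩
    refine ⟨hflat, fun K hK => ?_⟩
    classical
    set h : (↥K →₀ R) →ₗ[R] G :=
      Finsupp.lsum R (fun k : ↥K => LinearMap.toSpanSingleton R G (k : G)) with hh
    have hrange : LinearMap.range h = K := by
      apply le_antisymm
      · rintro _ ⟨v, rfl⟩
        induction v using Finsupp.induction_linear with
        | zero => simp
        | add f g hf hg => rw [map_add]; exact K.add_mem hf hg
        | single k r =>
          rw [hh]
          simpa [Finsupp.lsum_single, LinearMap.toSpanSingleton_apply] using
            K.smul_mem r k.2
      · intro x hx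
        exact ⟨Finsupp.single ⟨x, hx⟩ 1, by
          simp [hh, Finsupp.lsum_single, LinearMap.toSpanSingleton_apply]⟩
    have hepi : EpiInFlat h := (epiInFlat_iff h).2 (tau_quot_congr hrange.symm hK)
    have hsurj := hobj _ (flat_finsupp _ R (Module.Flat.self (R := R))) h hepi
    rw [← hrange, LinearMap.range_eq_top.2 hsurj]
  · rintro ⟨hflat, hctf⟩
    refine ⟨hflat, fun H _ _ hH h hepi => ?_⟩
    have := hctf _ ((epiInFlat_iff h).1 hepi)
    exact LinearMap.range_eq_top.1 this

include hher in
lemma lTau_smul_eq_zero {X : Type u} [AddCommGroup X] [Module R X] (hX : TauTorsion R X) :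
    ∀ a ∈ LTau R, ∀ x : X, a • x = 0 := by
  intro a ha x
  set φ := LinearMap.toSpanSingleton R X x with hφ
  have hKtor : TauTorsion R ↥(LinearMap.range φ) := hher X hX _
  have hq : TauTorsion R (R ⧸ LinearMap.ker φ) :=
    tau_of_surjective (φ.quotKerEquivRange).symm.toLinearMap
      (φ.quotKerEquivRange).symm.surjective hKtor
  have hle : LTau R ≤ LinearMap.ker φ := sInf_le hq
  simpa [hφ, LinearMap.toSpanSingleton_apply] using (hle ha : φ a = 0)

lemma tau_of_lTau_smul (hR : TauTorsion R (R ⧸ LTau R)) {X : Type u} [AddCommGroup X]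
    [Module R X] (hX : ∀ a ∈ LTau R, ∀ x : X, a • x = 0) : TauTorsion R X := by
  intro F _ _ hF f
  ext x
  set φ : R →ₗ[R] F := f ∘ₗ LinearMap.toSpanSingleton R X x with hφ
  have hle : LTau R ≤ LinearMap.ker φ := by
    intro a ha
    simp [hφ, LinearMap.mem_ker, LinearMap.toSpanSingleton_apply, hX a ha x]
  have h0 := hR F hF ((LTau R).liftQ φ hle)
  have hval := LinearMap.congr_fun h0 (Submodule.Quotient.mk (1 : R))
  rw [Submodule.liftQ_apply] at hval
  simpa [hφ, LinearMap.toSpanSingleton_apply] using hval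

include hher in
lemma ctf_finsupp {ι M : Type u} [AddCommGroup M] [Module R M] (hM : TauCotorsionFree R M) :
    TauCotorsionFree R (ι →₀ M) := by
  intro K hK
  classical
  have hsingle : ∀ (i : ι) (m : M), Finsupp.single i m ∈ K := by
    intro i m
    have hmap : TauTorsion R (M ⧸ K.comap (Finsupp.lsingle i)) := by
      refine tau_of_injective hher
        (Submodule.mapQ _ K (Finsupp.lsingle i) le_rfl) ?_ hK
      intro a b hab
      obtain ⟨a, rfl⟩ := Submodule.Quotient.mk_surjective _ a
      obtain ⟨b, rfl⟩ := Submodule.Quotient.mk_surjective _ b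
      rw [Submodule.mapQ_apply, Submodule.mapQ_apply, Submodule.Quotient.eq] at hab
      rw [Submodule.Quotient.eq]
      rw [← map_sub] at hab
      exact hab
    have := hM _ hmap
    have hmem : m ∈ K.comap (Finsupp.lsingle i) := this ▸ Submodule.mem_top
    simpa using hmem
  rw [eq_top_iff]
  rintro v -
  induction v using Finsupp.induction_linear with
  | zero => exact K.zero_mem
  | add f g hf hg => exact K.add_mem hf hg
  | single i m => exact hsingle i m

include hher in
lemma quot_lTau_torsion_of_products
    (hprod : ∀ (ι : Type u) (T : ι → Type u) [∀ i, AddCommGroup (T i)] [∀ i, Module R (T i)],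
      (∀ i, TauTorsion R (T i)) → TauTorsion R (∀ i, T i)) :
    TauTorsion R (R ⧸ LTau R) := by
  set S := {I : Submodule R R | TauTorsion R (R ⧸ I)} with hS
  set Φ : R →ₗ[R] (∀ i : ↥S, R ⧸ (i : Submodule R R)) :=
    LinearMap.pi (fun i => ((i : Submodule R R)).mkQ) with hΦ
  have hle : LTau R ≤ LinearMap.ker Φ := by
    intro r hr
    have : ∀ i : ↥S, (i : Submodule R R).mkQ r = 0 := by
      intro i
      exact (Submodule.Quotient.mk_eq_zero _).2 (Submodule.mem_sInf.1 hr _ i.2)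
    simp [hΦ, LinearMap.mem_ker]
    exact funext this
  have hinj : Function.Injective ((LTau R).liftQ Φ hle) := by
    intro a b hab
    obtain ⟨a, rfl⟩ := Submodule.Quotient.mk_surjective _ a
    obtain ⟨b, rfl⟩ := Submodule.Quotient.mk_surjective _ b
    rw [Submodule.liftQ_apply, Submodule.liftQ_apply] at hab
    rw [Submodule.Quotient.eq]
    apply Submodule.mem_sInf.2
    intro I hI
    have := congrFun hab ⟨I, hI⟩
    simp only [hΦ, LinearMap.pi_apply] at this
    rw [← sub_eq_zero, ← map_sub] at this
    exact (Submodule.Quotient.mk_eq_zero _).1 (by simpa using this)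
  exact tau_of_injective hher _ hinj
    (hprod _ _ (fun i => i.2))

end Helpers2

section Main

variable (hher : ∀ (M : Type u) [AddCommGroup M] [Module R M], TauTorsion R M →
      ∀ K : Submodule R M, TauTorsion R ↥K)

include hher in
lemma one_implies_two
    (h1 : ∀ (F : Type u) [AddCommGroup F] [Module R F], Module.Flat R F →
        ∃ (G : ModuleCat.{u} R) (f : ↥G →ₗ[R] F),
          IsFlatObjectOfFlat R ↥G ∧ EpiInFlat f) :
    ((∀ (ι : Type u) (T : ι → Type u) [∀ i, AddCommGroup (T i)] [∀ i, Module R (T i)],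
         (∀ i, TauTorsion R (T i)) → TauTorsion R (∀ i, T i)) ∧
      (∃ (G : ModuleCat.{u} R) (g : ↥G →ₗ[R] ↥(LTau R)),
         Module.Flat R ↥G ∧ TauCotorsionFree R ↥G ∧ Function.Surjective g)) := by
  obtain ⟨G, e, hGobj, hepi⟩ := h1 R (Module.Flat.self (R := R))
  obtain ⟨hGflat, hGctf⟩ := (flatObject_iff (R := R)).1 hGobj
  have hI : TauTorsion R (R ⧸ LinearMap.range e) := (epiInFlat_iff e).1 hepi
  -- range e ≤ every τ-dense ideal
  have hIle : ∀ J ∈ {I : Submodule R R | TauTorsion R (R ⧸ I)}, LinearMap.range e ≤ J := by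
    intro J hJ
    have hmap : TauTorsion R (↥G ⧸ J.comap e) := by
      refine tau_of_injective hher (Submodule.mapQ _ J e le_rfl) ?_ hJ
      intro a b hab
      obtain ⟨a, rfl⟩ := Submodule.Quotient.mk_surjective _ a
      obtain ⟨b, rfl⟩ := Submodule.Quotient.mk_surjective _ b
      rw [Submodule.mapQ_apply, Submodule.mapQ_apply, Submodule.Quotient.eq] at hab
      rw [Submodule.Quotient.eq]
      rw [← map_sub] at hab
      exact hab
    have htop := hGctf _ hmap
    rintro _ ⟨u, rfl⟩
    have : u ∈ J.comap e := htop ▸ Submodule.mem_top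
    exact this
  have hLeq : LTau R = LinearMap.range e :=
    le_antisymm (sInf_le hI) (le_sInf hIle)
  have hRL : TauTorsion R (R ⧸ LTau R) := tau_quot_congr hLeq.symm hI
  constructor
  · intro ι T _ _ hT
    apply tau_of_lTau_smul hRL
    intro a ha x
    funext i
    have := lTau_smul_eq_zero hher (hT i) a ha (x i)
    simpa using this
  · refine ⟨G, LinearMap.codRestrict (LTau R) e (fun u => hLeq ▸ ⟨u, rfl⟩), hGflat, hGctf, ?_⟩
    rintro ⟨y, hy⟩
    obtain ⟨u, hu⟩ := (hLeq ▸ hy : y ∈ LinearMap.range e)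
    exact ⟨u, Subtype.ext (by simpa [LinearMap.codRestrict_apply] using hu)⟩

include hher in
lemma two_implies_one
    (h2 : ((∀ (ι : Type u) (T : ι → Type u) [∀ i, AddCommGroup (T i)] [∀ i, Module R (T i)],
         (∀ i, TauTorsion R (T i)) → TauTorsion R (∀ i, T i)) ∧
      (∃ (G : ModuleCat.{u} R) (g : ↥G →ₗ[R] ↥(LTau R)),
         Module.Flat R ↥G ∧ TauCotorsionFree R ↥G ∧ Function.Surjective g))) :
    ∀ (F : Type u) [AddCommGroup F] [Module R F], Module.Flat R F →
        ∃ (G : ModuleCat.{u} R) (f : ↥G →ₗ[R] F),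
          IsFlatObjectOfFlat R ↥G ∧ EpiInFlat f := by
  obtain ⟨hprod, G₀, g, hflat, hctf, hsurj⟩ := h2
  have hRL : TauTorsion R (R ⧸ LTau R) := quot_lTau_torsion_of_products hher hprod
  intro F _ _ hF
  classical
  set Φ : (F →₀ ↥G₀) →ₗ[R] F :=
    Finsupp.lsum R (fun x : F =>
      (LinearMap.toSpanSingleton R F x) ∘ₗ ((LTau R).subtype ∘ₗ g)) with hΦ
  have hdense : TauTorsion R (F ⧸ LinearMap.range Φ) := by
    apply tau_of_lTau_smul hRL
    intro a ha y
    obtain ⟨x, rfl⟩ := Submodule.Quotient.mk_surjective _ y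
    obtain ⟨u, hu⟩ := hsurj ⟨a, ha⟩
    have hmem : a • x ∈ LinearMap.range Φ := by
      refine ⟨Finsupp.single x u, ?_⟩
      have : ((g u : R)) = a := congrArg Subtype.val hu
      simp [hΦ, Finsupp.lsum_single, LinearMap.toSpanSingleton_apply, this]
    rw [← Submodule.Quotient.mk_smul]
    exact (Submodule.Quotient.mk_eq_zero _).2 hmem
  refine ⟨ModuleCat.of R (F →₀ ↥G₀), Φ, ?_, (epiInFlat_iff Φ).2 hdense⟩
  exact (flatObject_iff (R := R)).2 ⟨flat_finsupp _ _ hflat, ctf_finsupp hher hctf⟩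

include hher in
lemma two_implies_three
    (h2 : ((∀ (ι : Type u) (T : ι → Type u) [∀ i, AddCommGroup (T i)] [∀ i, Module R (T i)],
         (∀ i, TauTorsion R (T i)) → TauTorsion R (∀ i, T i)) ∧
      (∃ (G : ModuleCat.{u} R) (g : ↥G →ₗ[R] ↥(LTau R)),
         Module.Flat R ↥G ∧ TauCotorsionFree R ↥G ∧ Function.Surjective g))) :
    (∃ G : ModuleCat.{u} R,
        Module.Flat R ↥G ∧ Pseudoprojective R ↥G ∧ TauCotorsionFree R ↥G ∧
        ∀ (X : Type u) [AddCommGroup X] [Module R X],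
          (TauTorsion R X ↔ ∀ f : ↥G →ₗ[R] X, f = 0)) := by
  obtain ⟨hprod, G₀, g, hflat, hctf, hsurj⟩ := h2
  have hRL : TauTorsion R (R ⧸ LTau R) := quot_lTau_torsion_of_products hher hprod
  -- torsion ⇒ all maps from G₀ vanish
  have hfwd : ∀ (X : Type u) [AddCommGroup X] [Module R X], TauTorsion R X →
      ∀ f : ↥G₀ →ₗ[R] X, f = 0 := by
    intro X _ _ hX f
    have hmap : TauTorsion R (↥G₀ ⧸ LinearMap.ker f) := by
      refine tau_of_injective hher ((LinearMap.ker f).liftQ f le_rfl) ?_ hX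
      intro a b hab
      obtain ⟨a, rfl⟩ := Submodule.Quotient.mk_surjective _ a
      obtain ⟨b, rfl⟩ := Submodule.Quotient.mk_surjective _ b
      rw [Submodule.liftQ_apply, Submodule.liftQ_apply] at hab
      rw [Submodule.Quotient.eq]
      rw [← sub_eq_zero, ← map_sub] at hab
      exact hab
    have := hctf _ hmap
    exact LinearMap.ker_eq_top.1 this
  -- Hom(G₀, X) = 0 ⇒ torsion
  have hbwd : ∀ (X : Type u) [AddCommGroup X] [Module R X],
      (∀ f : ↥G₀ →ₗ[R] X, f = 0) → TauTorsion R X := by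
    intro X _ _ h0
    apply tau_of_lTau_smul hRL
    intro a ha x
    obtain ⟨u, hu⟩ := hsurj ⟨a, ha⟩
    have hz := h0 ((LinearMap.toSpanSingleton R X x) ∘ₗ ((LTau R).subtype ∘ₗ g))
    have := LinearMap.congr_fun hz u
    have hgua : ((g u : R)) = a := congrArg Subtype.val hu
    simpa [LinearMap.toSpanSingleton_apply, hgua] using this
  refine ⟨G₀, hflat, ?_, hctf, fun X _ _ => ⟨hfwd X, hbwd X⟩⟩
  -- pseudoprojectivity
  intro A B _ _ _ _ p hp ψ hψ
  have hnz : ¬ ∀ a ∈ LTau R, ∀ u : ↥G₀, a • ψ u = 0 := by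
    intro hall
    apply hψ
    have htor : TauTorsion R ↥(LinearMap.range ψ) := by
      apply tau_of_lTau_smul hRL
      intro a ha y
      apply Subtype.ext
      obtain ⟨u, hu⟩ := y.2
      simp only [Submodule.coe_smul, ZeroMemClass.coe_zero]
      rw [← hu]
      exact hall a ha u
    have := hfwd _ htor ψ.rangeRestrict
    ext u
    have := LinearMap.congr_fun this u
    simpa [LinearMap.rangeRestrict] using congrArg Subtype.val this
  push_neg at hnz
  obtain ⟨a, ha, w, hna⟩ := hnz
  obtain ⟨u₀, hu₀⟩ := hsurj ⟨a, ha⟩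
  obtain ⟨α, hα⟩ := hp (ψ w)
  set c : ↥G₀ →ₗ[R] R := (LTau R).subtype ∘ₗ g with hc
  refine ⟨c.smulRight w, c.smulRight α, ?_, ?_⟩
  · ext u
    simp [LinearMap.smulRight_apply, map_smul, hα]
  · intro h0
    apply hna
    have := LinearMap.congr_fun h0 u₀
    have hgua : c u₀ = a := congrArg Subtype.val hu₀
    simpa [LinearMap.smulRight_apply, map_smul, hgua] using this

include hher in
lemma three_implies_two
    (h3 : (∃ G : ModuleCat.{u} R,
        Module.Flat R ↥G ∧ Pseudoprojective R ↥G ∧ TauCotorsionFree R ↥G ∧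
        ∀ (X : Type u) [AddCommGroup X] [Module R X],
          (TauTorsion R X ↔ ∀ f : ↥G →ₗ[R] X, f = 0))) :
    ((∀ (ι : Type u) (T : ι → Type u) [∀ i, AddCommGroup (T i)] [∀ i, Module R (T i)],
         (∀ i, TauTorsion R (T i)) → TauTorsion R (∀ i, T i)) ∧
      (∃ (G : ModuleCat.{u} R) (g : ↥G →ₗ[R] ↥(LTau R)),
         Module.Flat R ↥G ∧ TauCotorsionFree R ↥G ∧ Function.Surjective g)) := by
  obtain ⟨G, hflat, hpp, hctf, hchar⟩ := h3
  constructor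
  · intro ι T _ _ hT
    refine (hchar _).2 (fun f => ?_)
    refine LinearMap.ext fun u => funext fun i => ?_
    have hcomp : (LinearMap.proj i) ∘ₗ f = 0 := (hchar (T i)).1 (hT i) _
    simpa using LinearMap.congr_fun hcomp u
  · classical
    set e : ((↥G →ₗ[R] R) →₀ ↥G) →ₗ[R] R :=
      Finsupp.lsum R (fun f : ↥G →ₗ[R] R => f) with he
    have hsingle : ∀ (f : ↥G →ₗ[R] R) (u : ↥G), e (Finsupp.single f u) = f u := by
      intro f u
      simp [he, Finsupp.lsum_single]
    have hdense : TauTorsion R (R ⧸ LinearMap.range e) := by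
      refine (hchar _).2 (fun q => ?_)
      by_contra hq
      obtain ⟨s, h, hcomm, hne⟩ :=
        hpp _ _ ((LinearMap.range e).mkQ) (Submodule.mkQ_surjective _) q hq
      apply hne
      rw [← hcomm]
      ext u
      have hmem : h u ∈ LinearMap.range e := ⟨Finsupp.single h u, hsingle h u⟩
      have hz : ((LinearMap.range e).mkQ) (h u) = 0 :=
        (Submodule.Quotient.mk_eq_zero _).2 hmem
      simpa using hz
    have hTr_le : ∀ J ∈ {I : Submodule R R | TauTorsion R (R ⧸ I)}, LinearMap.range e ≤ J := by
      intro J hJ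
      have hmaps : ∀ f : ↥G →ₗ[R] R, ∀ u, f u ∈ J := by
        intro f u
        have h0 : J.mkQ ∘ₗ f = 0 := (hchar _).1 hJ _
        have hz := LinearMap.congr_fun h0 u
        rw [LinearMap.comp_apply, LinearMap.zero_apply, Submodule.mkQ_apply] at hz
        exact (Submodule.Quotient.mk_eq_zero J).1 hz
      rintro _ ⟨v, rfl⟩
      induction v using Finsupp.induction_linear with
      | zero => simp
      | add f g hf hg => rw [map_add]; exact J.add_mem hf hg
      | single f u => rw [hsingle]; exact hmaps f u
    have hLeq : LTau R = LinearMap.range e := le_antisymm (sInf_le hdense) (le_sInf hTr_le)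
    refine ⟨ModuleCat.of R ((↥G →ₗ[R] R) →₀ ↥G),
      LinearMap.codRestrict (LTau R) e (fun u => hLeq ▸ ⟨u, rfl⟩),
      flat_finsupp _ _ hflat, ctf_finsupp hher hctf, ?_⟩
    rintro ⟨y, hy⟩
    obtain ⟨u, hu⟩ := (hLeq ▸ hy : y ∈ LinearMap.range e)
    exact ⟨u, Subtype.ext (by simpa [LinearMap.codRestrict_apply] using hu)⟩

end Main

/-- Suppose `τ` is hereditary.  Then the following are equivalent: (1) `Flat(R)` has enough
flat objects; (2) `τ`-torsion modules are closed under products and there is a surjection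
from a flat `τ`-cotorsion-free module onto `L_τ(R)`; (3) there is a flat, pseudoprojective,
`τ`-cotorsion-free module `G` such that the `τ`-torsion modules are exactly the modules `X`
with `Hom_R(G, X) = 0`. -/
theorem enough_flat_objects_tfae (R : Type u) [CommRing R]
    (hher : ∀ (M : Type u) [AddCommGroup M] [Module R M], TauTorsion R M →
      ∀ K : Submodule R M, TauTorsion R ↥K) :
    ((∀ (F : Type u) [AddCommGroup F] [Module R F], Module.Flat R F →
        ∃ (G : ModuleCat.{u} R) (f : ↥G →ₗ[R] F),
          IsFlatObjectOfFlat R ↥G ∧ EpiInFlat f) ↔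
     ((∀ (ι : Type u) (T : ι → Type u) [∀ i, AddCommGroup (T i)] [∀ i, Module R (T i)],
         (∀ i, TauTorsion R (T i)) → TauTorsion R (∀ i, T i)) ∧
      (∃ (G : ModuleCat.{u} R) (g : ↥G →ₗ[R] ↥(LTau R)),
         Module.Flat R ↥G ∧ TauCotorsionFree R ↥G ∧ Function.Surjective g))) ∧
    (((∀ (ι : Type u) (T : ι → Type u) [∀ i, AddCommGroup (T i)] [∀ i, Module R (T i)],
         (∀ i, TauTorsion R (T i)) → TauTorsion R (∀ i, T i)) ∧
      (∃ (G : ModuleCat.{u} R) (g : ↥G →ₗ[R] ↥(LTau R)),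
         Module.Flat R ↥G ∧ TauCotorsionFree R ↥G ∧ Function.Surjective g)) ↔
     (∃ G : ModuleCat.{u} R,
        Module.Flat R ↥G ∧ Pseudoprojective R ↥G ∧ TauCotorsionFree R ↥G ∧
        ∀ (X : Type u) [AddCommGroup X] [Module R X],
          (TauTorsion R X ↔ ∀ f : ↥G →ₗ[R] X, f = 0))) := by
  exact ⟨⟨fun h1 => one_implies_two hher h1, fun h2 => two_implies_one hher h2⟩,
    ⟨fun h2 => two_implies_three hher h2, fun h3 => three_implies_two hher h3⟩⟩
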